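/- arXiv:1812.04167 — 2 statements merged into one kernel-verified Lean document; each statement's English description precedes it below -/
import Mathlib

section
/- Let G be a finite group, let p_1, ..., p_s be distinct primes, and for each i let M_i be a Sylow p_i-subgroup of G. Then for every x ∈ G, gcd(o(x, M_1), ..., o(x, M_s)) equals the order of the element x^{|M_1|·|M_2|·...·|M_s|}. -/
open Pointwise

/-- `nOrd S x` is the smallest positive integer `k` such that `x ^ k ∈ S`. -/
noncomputable def nOrd {G : Type*} [Group G] (S : Set G) (x : G) : ℕ :=
  sInf {k : ℕ | 0 < k ∧ x ^ k ∈ S}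

/-- `gOrd S x = gcd { nOrd S (g⁻¹ * x * g) : g ∈ G }`, the generalized order of `x`
with respect to `S`. -/
noncomputable def gOrd {G : Type*} [Group G] [Fintype G] (S : Set G) (x : G) : ℕ :=
  Finset.univ.gcd fun g : G => nOrd S (g⁻¹ * x * g)

section aux

lemma nOrd_spec {G : Type*} [Group G] [Fintype G] (S : Subgroup G) (y : G) :
    0 < nOrd (S : Set G) y ∧ y ^ nOrd (S : Set G) y ∈ S := by
  have h : (orderOf y) ∈ {k : ℕ | 0 < k ∧ y ^ k ∈ (S : Set G)} :=
    ⟨orderOf_pos y, by simp [pow_orderOf_eq_one, S.one_mem]⟩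
  exact Nat.sInf_mem ⟨_, h⟩

lemma nOrd_le {G : Type*} [Group G] (S : Subgroup G) (y : G) {k : ℕ} (hk : 0 < k)
    (h : y ^ k ∈ S) : nOrd (S : Set G) y ≤ k :=
  Nat.sInf_le ⟨hk, h⟩

/-- The generalized order of `x` w.r.t. a Sylow `p`-subgroup is the `p'`-part of the order. -/
lemma gOrd_sylow {G : Type*} [Group G] [Fintype G] {p : ℕ} (hp : p.Prime) (P : Sylow p G)
    (x : G) : gOrd ((P : Subgroup G) : Set G) x
      = orderOf x / p ^ (orderOf x).factorization p := by
  haveI : Fact p.Prime := ⟨hp⟩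
  set n := orderOf x with hn
  have hnpos : 0 < n := orderOf_pos x
  set e := n.factorization p with he
  have hpe : p ^ e ∣ n := Nat.ordProj_dvd n p
  set n' := n / p ^ e with hn'
  have hmul : n' * p ^ e = n := Nat.div_mul_cancel hpe
  have hn'pos : 0 < n' := Nat.div_pos (Nat.le_of_dvd hnpos hpe) (pow_pos hp.pos e)
  have hcop : Nat.Coprime n' p := by
    rw [Nat.coprime_comm, hp.coprime_iff_not_dvd]
    intro hdvd
    have hd : p ^ (e + 1) ∣ n := by
      rw [← hmul, mul_comm, pow_succ]
      exact mul_dvd_mul_left _ hdvd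
    have := (Nat.Prime.pow_dvd_iff_le_factorization hp hnpos.ne').mp hd
    omega
  obtain ⟨a, ha⟩ := IsPGroup.iff_card.mp P.isPGroup'
  have key1 : ∀ g : G, n' ∣ nOrd ((P : Subgroup G) : Set G) (g⁻¹ * x * g) := by
    intro g
    obtain ⟨hkpos, hkmem⟩ := nOrd_spec (P : Subgroup G) (g⁻¹ * x * g)
    set k := nOrd ((P : Subgroup G) : Set G) (g⁻¹ * x * g)
    have horder : orderOf (g⁻¹ * x * g) = n := by
      have := (MulAut.conj g⁻¹).orderOf_eq x
      simpa [MulAut.conj_apply] using this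
    have hdvd : orderOf ((g⁻¹ * x * g) ^ k) ∣ p ^ a := by
      have h1 := orderOf_dvd_natCard (⟨_, hkmem⟩ : (P : Subgroup G))
      rwa [Subgroup.orderOf_mk, ha] at h1
    rw [orderOf_pow', horder] at hdvd
    · have h2 : n' ∣ Nat.gcd n k * (n / Nat.gcd n k) := by
        rw [Nat.mul_div_cancel' (Nat.gcd_dvd_left n k)]
        exact Nat.div_dvd_of_dvd hpe
      have h3 : Nat.Coprime n' (n / Nat.gcd n k) :=
        Nat.Coprime.coprime_dvd_right hdvd (Nat.Coprime.pow_right a hcop)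
      exact (Nat.Coprime.dvd_of_dvd_mul_right h3 h2).trans (Nat.gcd_dvd_right n k)
    · exact hkpos.ne'
  have key2 : ∃ g : G, nOrd ((P : Subgroup G) : Set G) (g⁻¹ * x * g) ≤ n' := by
    have hz : orderOf (x ^ n') = p ^ e := orderOf_pow_orderOf_div hnpos.ne' hpe
    have hpg : IsPGroup p (Subgroup.zpowers (x ^ n')) := by
      apply IsPGroup.of_card
      rw [Nat.card_zpowers, hz]
    obtain ⟨Q, hQ⟩ := hpg.exists_le_sylow
    obtain ⟨g, hg⟩ := MulAction.exists_smul_eq G Q P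
    refine ⟨g⁻¹, nOrd_le _ _ hn'pos ?_⟩
    have hzz : x ^ n' ∈ (Q : Subgroup G) := hQ (Subgroup.mem_zpowers _)
    have hmem : MulAut.conj g (x ^ n') ∈ MulAut.conj g • (Q : Subgroup G) :=
      Subgroup.smul_mem_pointwise_smul _ _ _ hzz
    have hQP : MulAut.conj g • (Q : Subgroup G) = (P : Subgroup G) := by
      rw [← hg]; rfl
    rw [hQP, MulAut.conj_apply] at hmem
    show ((g⁻¹)⁻¹ * x * g⁻¹) ^ n' ∈ (P : Subgroup G)
    rw [inv_inv, conj_pow]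
    exact hmem
  obtain ⟨g, hg⟩ := key2
  have heq : nOrd ((P : Subgroup G) : Set G) (g⁻¹ * x * g) = n' :=
    le_antisymm hg (Nat.le_of_dvd (nOrd_spec _ _).1 (key1 g))
  refine Nat.dvd_antisymm ?_ (Finset.dvd_gcd fun g _ => key1 g)
  calc gOrd ((P : Subgroup G) : Set G) x
      ∣ nOrd ((P : Subgroup G) : Set G) (g⁻¹ * x * g) := Finset.gcd_dvd (Finset.mem_univ g)
    _ = n' := heq

lemma prod_dvd_of_pairwise_coprime {ι : Type*} [DecidableEq ι] {t : Finset ι} {f : ι → ℕ} {n : ℕ}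
    (hcop : ∀ i ∈ t, ∀ j ∈ t, i ≠ j → Nat.Coprime (f i) (f j))
    (hdvd : ∀ i ∈ t, f i ∣ n) : (∏ i ∈ t, f i) ∣ n := by
  induction t using Finset.induction with
  | empty => simpa using one_dvd n
  | @insert a t ha ih =>
    rw [Finset.prod_insert ha]
    have hc : Nat.Coprime (f a) (∏ i ∈ t, f i) :=
      Nat.Coprime.prod_right fun i hi =>
        hcop a (Finset.mem_insert_self a t) i (Finset.mem_insert_of_mem hi)
          (fun h => ha (h ▸ hi))
    exact hc.mul_dvd_of_dvd_of_dvd (hdvd a (Finset.mem_insert_self a t))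
      (ih (fun i hi j hj hij => hcop i (Finset.mem_insert_of_mem hi) j
        (Finset.mem_insert_of_mem hj) hij)
        (fun i hi => hdvd i (Finset.mem_insert_of_mem hi)))

/-- gcd of `n / d i` over pairwise coprime divisors `d i` of `n`. -/
lemma gcd_div_eq {s : ℕ} (hs : 0 < s) {n : ℕ} (hn : 0 < n) (d : Fin s → ℕ)
    (hd : ∀ i, d i ∣ n) (hcop : ∀ i j, i ≠ j → Nat.Coprime (d i) (d j)) :
    (Finset.univ.gcd fun i => n / d i) = n / ∏ i, d i := by
  have hdpos : ∀ i, 0 < d i := fun i => Nat.pos_of_dvd_of_pos (hd i) hn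
  have hD : (∏ i, d i) ∣ n :=
    prod_dvd_of_pairwise_coprime (fun i _ j _ hij => hcop i j hij) (fun i _ => hd i)
  obtain ⟨q, hq⟩ := hD
  have hqpos : 0 < q := by
    rcases Nat.eq_zero_or_pos q with h | h
    · rw [h, mul_zero] at hq; omega
    · exact h
  set E : Fin s → ℕ := fun i => ∏ j ∈ Finset.univ.erase i, d j with hE
  have hEd : ∀ i, d i * E i = ∏ j, d j := fun i =>
    Finset.mul_prod_erase Finset.univ d (Finset.mem_univ i)
  have hdiv : ∀ i, n / d i = E i * q := by
    intro i
    refine Nat.div_eq_of_eq_mul_left (hdpos i) ?_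
    rw [hq, ← hEd i]; ring
  have hqn : n / ∏ i, d i = q :=
    Nat.div_eq_of_eq_mul_right (Finset.prod_pos fun i _ => hdpos i) hq
  rw [hqn]
  have hqg : q ∣ Finset.univ.gcd fun i => n / d i :=
    Finset.dvd_gcd fun i _ => (hdiv i) ▸ dvd_mul_left q (E i)
  obtain ⟨m, hm⟩ := hqg
  have hmE : ∀ i, m ∣ E i := by
    intro i
    have h1 : (Finset.univ.gcd fun i => n / d i) ∣ n / d i :=
      Finset.gcd_dvd (Finset.mem_univ i)
    rw [hm, hdiv i, mul_comm (E i) q] at h1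
    exact (mul_dvd_mul_iff_left hqpos.ne').mp h1
  have hmcop : ∀ i, Nat.Coprime m (d i) := by
    intro i
    have h2 : Nat.Coprime (E i) (d i) :=
      Nat.Coprime.prod_left fun j hj =>
        hcop j i (Finset.ne_of_mem_erase hj)
    exact Nat.Coprime.coprime_dvd_left (hmE i) h2
  have hm1 : m = 1 := by
    have hcE : Nat.Coprime m (E ⟨0, hs⟩) :=
      Nat.Coprime.prod_right fun j _ => hmcop j
    exact hcE.eq_one_of_dvd (hmE ⟨0, hs⟩)
  rw [hm, hm1, mul_one]

end aux

theorem stmt12 {G : Type*} [Group G] [Fintype G] (s : ℕ) (hs : 0 < s)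
    (p : Fin s → ℕ) (hp : ∀ i, (p i).Prime) (hinj : Function.Injective p)
    (M : ∀ i, Sylow (p i) G) (x : G) :
    (Finset.univ.gcd fun i => gOrd (((M i : Subgroup G) : Set G)) x) =
      orderOf (x ^ ∏ i, Nat.card (M i : Subgroup G)) := by
  set n := orderOf x with hn
  have hnpos : 0 < n := orderOf_pos x
  set e : Fin s → ℕ := fun i => n.factorization (p i) with he
  set d : Fin s → ℕ := fun i => (p i) ^ (e i) with hdd
  have hd : ∀ i, d i ∣ n := fun i => Nat.ordProj_dvd n (p i)
  have hdpos : ∀ i, 0 < d i := fun i => pow_pos (hp i).pos (e i)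
  have hcop : ∀ i j, i ≠ j → Nat.Coprime (d i) (d j) := by
    intro i j hij
    exact Nat.Coprime.pow _ _ ((Nat.coprime_primes (hp i) (hp j)).mpr
      (fun h => hij (hinj h)))
  have hDdvd : (∏ i, d i) ∣ n :=
    prod_dvd_of_pairwise_coprime (fun i _ j _ hij => hcop i j hij) (fun i _ => hd i)
  have hDpos : 0 < ∏ i, d i := Finset.prod_pos fun i _ => hdpos i
  -- LHS
  have hLHS : (Finset.univ.gcd fun i => gOrd (((M i : Subgroup G) : Set G)) x)
      = n / ∏ i, d i := by
    rw [Finset.gcd_congr rfl (fun i _ => gOrd_sylow (hp i) (M i) x)]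
    exact gcd_div_eq hs hnpos d hd hcop
  -- cardinalities of the Sylow subgroups
  set a : Fin s → ℕ := fun i => (Nat.card G).factorization (p i) with ha
  have hcard : ∀ i, Nat.card (M i : Subgroup G) = (p i) ^ (a i) := by
    intro i
    haveI : Fact (p i).Prime := ⟨hp i⟩
    exact Sylow.card_eq_multiplicity (M i)
  have hea : ∀ i, e i ≤ a i := by
    intro i
    have h1 : (p i) ^ (e i) ∣ Nat.card G := (hd i).trans (orderOf_dvd_natCard x)
    exact (Nat.Prime.pow_dvd_iff_le_factorization (hp i) Nat.card_pos.ne').mp h1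
  set c : Fin s → ℕ := fun i => (p i) ^ (a i - e i) with hc
  have hprod : (∏ i, Nat.card (M i : Subgroup G)) = (∏ i, d i) * (∏ i, c i) := by
    rw [← Finset.prod_mul_distrib]
    refine Finset.prod_congr rfl fun i _ => ?_
    rw [hcard i]
    show (p i) ^ (a i) = (p i) ^ (e i) * (p i) ^ (a i - e i)
    rw [← pow_add]
    congr 1
    have := hea i
    omega
  have horder1 : orderOf (x ^ ∏ i, d i) = n / ∏ i, d i :=
    orderOf_pow_of_dvd hDpos.ne' hDdvd
  have hcop2 : Nat.Coprime (n / ∏ i, d i) (∏ i, c i) := by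
    refine Nat.Coprime.prod_right fun i _ => Nat.Coprime.pow_right _ ?_
    rw [Nat.coprime_comm, (hp i).coprime_iff_not_dvd]
    intro hdvd
    obtain ⟨t, ht⟩ := hdvd
    have hnn : n = (∏ j, d j) * ((p i) * t) := by
      rw [← ht, Nat.mul_div_cancel' hDdvd]
    have hpe : (p i) ^ (e i + 1) ∣ n := by
      rw [hnn, ← mul_assoc, pow_succ]
      exact (mul_dvd_mul (Finset.dvd_prod_of_mem d (Finset.mem_univ i)) dvd_rfl).mul_right t
    have := (Nat.Prime.pow_dvd_iff_le_factorization (hp i) hnpos.ne').mp hpe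
    have : e i + 1 ≤ e i := this
    omega
  rw [hLHS, hprod, pow_mul]
  rw [Nat.Coprime.orderOf_pow (horder1 ▸ hcop2), horder1]
end

section
/- Let G be a finite group, let M_1, ..., M_s be subgroups of G, let x ∈ G, and let d be a positive integer. Set E(x, M_1, ..., M_s) = gcd(o(x, M_1), ..., o(x, M_s)). Then E(x^d, M_1, ..., M_s) = E(x, M_1, ..., M_s) / gcd(d, E(x, M_1, ..., M_s)). -/
/-- `EOrd M x = gcd (gOrd M₁ x, ..., gOrd Mₛ x)` for a family of subgroups `M`. -/
noncomputable def EOrd {G : Type*} [Group G] [Fintype G] {s : ℕ}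
    (M : Fin s → Subgroup G) (x : G) : ℕ :=
  Finset.univ.gcd fun i => gOrd ((M i : Subgroup G) : Set G) x

namespace Nat

theorem factorization_div_gcd {d : ℕ} (hd : d ≠ 0) (a : ℕ) :
    (a / gcd d a).factorization = a.factorization - d.factorization := by
  rcases eq_or_ne a 0 with rfl | ha
  · simp
  ext p
  rw [factorization_div (gcd_dvd_right d a), factorization_gcd hd ha]
  simp only [Finsupp.tsub_apply, Finsupp.inf_apply]
  omega

theorem gcd_div_gcd_div_gcd_eq {d : ℕ} (hd : d ≠ 0) (a b : ℕ) :
    gcd (a / gcd d a) (b / gcd d b) = gcd a b / gcd d (gcd a b) := by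
  rcases eq_or_ne a 0 with rfl | ha
  · simp
  rcases eq_or_ne b 0 with rfl | hb
  · simp
  have div_gcd_ne_zero {c : ℕ} (hc : c ≠ 0) : c / gcd d c ≠ 0 :=
    (Nat.div_pos (le_of_dvd (pos_of_ne_zero hc) (gcd_dvd_right d c))
      (gcd_pos_of_pos_left c (pos_of_ne_zero hd))).ne'
  have hab : gcd a b ≠ 0 := gcd_ne_zero_left ha
  apply eq_of_factorization_eq (gcd_ne_zero_left (div_gcd_ne_zero ha)) (div_gcd_ne_zero hab)
  intro p
  simp only [factorization_gcd (div_gcd_ne_zero ha) (div_gcd_ne_zero hb),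
    factorization_div_gcd hd, factorization_gcd ha hb, Finsupp.tsub_apply, Finsupp.inf_apply]
  omega

end Nat

theorem Finset.gcd_div_gcd {ι : Type*} (s : Finset ι) {d : ℕ} (hd : d ≠ 0) (f : ι → ℕ) :
    (s.gcd fun i => f i / Nat.gcd d (f i)) = s.gcd f / Nat.gcd d (s.gcd f) := by
  classical
  induction s using Finset.induction with
  | empty => simp
  | insert _ _ _ ih =>
    rw [gcd_insert, gcd_insert, ih]
    exact Nat.gcd_div_gcd_div_gcd_eq hd _ _

section

variable {G : Type*} [Group G]

theorem nOrd_eq_period (N : Subgroup G) (x : G) :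
    nOrd N x = MulAction.period x ((1 : G) : G ⧸ N) := by
  rw [MulAction.period_eq_minimalPeriod, Function.minimalPeriod_eq_sInf_n_pos_IsPeriodicPt,
    nOrd]
  congr! 3 with k
  rw [MulAction.isPeriodicPt_smul_iff, MulAction.Quotient.smul_mk, QuotientGroup.eq]
  simp

theorem nOrd_pow (N : Subgroup G) (x : G) {d : ℕ} (hd : d ≠ 0) :
    nOrd N (x ^ d) = nOrd N x / Nat.gcd d (nOrd N x) := by
  rw [nOrd_eq_period, nOrd_eq_period, MulAction.period_eq_minimalPeriod,
    MulAction.period_eq_minimalPeriod, ← smul_iterate, Function.minimalPeriod_iterate_eq_div_gcd hd,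
    Nat.gcd_comm]

theorem gOrd_pow [Fintype G] (N : Subgroup G) (x : G) {d : ℕ} (hd : d ≠ 0) :
    gOrd N (x ^ d) = gOrd N x / Nat.gcd d (gOrd N x) := by
  rw [gOrd, gOrd, ← Finset.gcd_div_gcd _ hd]
  refine Finset.gcd_congr rfl fun g _ => ?_
  rw [← nOrd_pow N _ hd]
  congr 1
  simpa using (conj_pow (a := g⁻¹) (b := x) (i := d)).symm

end

theorem stmt13 {G : Type*} [Group G] [Fintype G] (s : ℕ) (M : Fin s → Subgroup G)
    (x : G) (d : ℕ) (hd : 0 < d) :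
    EOrd M (x ^ d) = EOrd M x / Nat.gcd d (EOrd M x) := by
  rw [EOrd, EOrd, ← Finset.gcd_div_gcd _ hd.ne']
  exact Finset.gcd_congr rfl fun i _ => gOrd_pow (M i) x hd.ne'
end
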